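/- arXiv:1708.01209 — 2 statements merged into one kernel-verified Lean document; each statement's English description precedes it below -/
import Mathlib

section
/- For every complex z with 0 < Re z < 1, the functional equation π^{-z/2}/(2 - 2^z) · Γ(1 - z/2) · G(z) = π^{-(1-z)/2}/(2 - 2^{1-z}) · Γ(1 - (1-z)/2) · G(1-z) holds (all factors being finite and the denominators 2 - 2^z and 2 - 2^{1-z} nonzero on this strip). -/
open MeasureTheory

/-- `G z = ∫₀^∞ ξ^(z-1) / (exp ξ + 1) dξ`. -/
noncomputable def G (z : ℂ) : ℂ :=
  ∫ ξ in Set.Ioi (0 : ℝ), (ξ : ℂ) ^ (z - 1) / (Real.exp ξ + 1)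

/-!
Expanding `1 / (e^ξ + 1) = ∑ₙ (-1)ⁿ e^{-(n+1)ξ}` shows that for `Re z > 1` the Mellin transform
`G z` equals `Γ(z) η(z) = (1 - 2^{1-z}) Γ(z) ζ(z)`, and by analytic continuation this persists
on the strip `0 < Re z < 1`. There `2 - 2^z = -2^z (1 - 2^{1-z})` cancels the eta factor, and
Legendre's duplication formula turns `Γ(z) / 2^z` into `Γ(z/2) Γ((z+1)/2) / (2√π)`. The
left-hand side becomes `-Γ(1 - z/2) Γ((1+z)/2) Λ(z) / (2√π)` with `Λ` the completed zeta
function; the Gamma factor is symmetric under `z ↦ 1 - z`, and so is `Λ`.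
-/

open Complex Set Filter Asymptotics Topology

noncomputable def fermiDirac (t : ℝ) : ℝ := (Real.exp t + 1)⁻¹

lemma fermiDirac_pos (t : ℝ) : 0 < fermiDirac t := by
  unfold fermiDirac
  positivity

lemma fermiDirac_le_one (t : ℝ) : fermiDirac t ≤ 1 :=
  inv_le_one_of_one_le₀ (by linarith [Real.exp_pos t])

lemma fermiDirac_le_exp_neg (t : ℝ) : fermiDirac t ≤ Real.exp (-t) := by
  rw [Real.exp_neg]
  exact inv_anti₀ (Real.exp_pos t) (by linarith)

lemma continuous_fermiDirac : Continuous fermiDirac :=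
  (by fun_prop : Continuous fun t => Real.exp t + 1).inv₀ fun t => by positivity

lemma hasSum_fermiDirac {t : ℝ} (ht : 0 < t) :
    HasSum (fun n : ℕ => (-1) ^ n * Real.exp (-(n + 1) * t)) (fermiDirac t) := by
  have hq : |-Real.exp (-t)| < 1 := by
    rw [abs_neg, abs_of_pos (Real.exp_pos _), Real.exp_lt_one_iff]
    linarith
  have hsum : (1 - -Real.exp (-t))⁻¹ * Real.exp (-t) = fermiDirac t := by
    rw [fermiDirac, sub_neg_eq_add, Real.exp_neg]
    field_simp
  refine hsum ▸ ((hasSum_geometric_of_abs_lt_one hq).mul_right _).congr_fun fun n => ?_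
  rw [neg_pow (Real.exp _), ← Real.exp_nat_mul, mul_assoc, ← Real.exp_add]
  ring_nf

lemma G_eq_mellin (z : ℂ) : G z = mellin (fun t => (fermiDirac t : ℂ)) z := by
  simp [G, mellin, fermiDirac, div_eq_mul_inv]

lemma differentiableAt_mellin_fermiDirac {s : ℂ} (hs : 0 < s.re) :
    DifferentiableAt ℂ (mellin (fun t => (fermiDirac t : ℂ))) s := by
  have hnorm (t : ℝ) : ‖(fermiDirac t : ℂ)‖ = fermiDirac t :=
    (norm_real _).trans (Real.norm_of_nonneg (fermiDirac_pos t).le)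
  refine mellin_differentiableAt_of_isBigO_rpow_exp one_pos
    ((continuous_ofReal.comp continuous_fermiDirac).locallyIntegrable.locallyIntegrableOn _)
    ?_ ?_ (b := 0) hs
  · refine isBigO_of_le _ fun t => ?_
    rw [hnorm, Real.norm_of_nonneg (Real.exp_pos _).le, neg_one_mul]
    exact fermiDirac_le_exp_neg t
  · refine isBigO_of_le _ fun t => ?_
    rw [hnorm]
    simpa using fermiDirac_le_one t

lemma hasSum_neg_one_pow_div_nat_add_one_cpow {s : ℂ} (hs : 1 < s.re) :
    HasSum (fun n : ℕ => (-1) ^ n / ((n : ℂ) + 1) ^ s) ((1 - 2 ^ (1 - s)) * riemannZeta s) := by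
  have hζ : HasSum (fun n : ℕ => 1 / ((n : ℂ) + 1) ^ s) (riemannZeta s) := by
    rw [zeta_eq_tsum_one_div_nat_add_one_cpow hs]
    exact_mod_cast ((summable_nat_add_iff 1).mpr (Complex.summable_one_div_nat_cpow.mpr hs)).hasSum
  -- `1 - (-1)ⁿ` kills the even terms and doubles the odd ones, where `(2k + 2)^s = 2^s (k + 1)^s`.
  have hodd : HasSum (fun n : ℕ => (1 - (-1) ^ n) / ((n : ℂ) + 1) ^ s)
      (0 + 2 ^ (1 - s) * riemannZeta s) := by
    refine HasSum.even_add_odd (hasSum_zero.congr_fun fun k => ?_)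
      ((hζ.mul_left (2 ^ (1 - s))).congr_fun fun k => ?_)
    · simp [pow_mul]
    · have h2 : ((2 * k + 1 : ℕ) : ℂ) + 1 = (2 : ℕ) * ((k + 1 : ℕ) : ℂ) := by push_cast; ring
      rw [h2, natCast_mul_natCast_cpow, cpow_sub _ _ two_ne_zero, cpow_one, pow_succ, pow_mul]
      push_cast
      field_simp
      ring
  have h := hζ.sub hodd
  rw [zero_add, ← one_sub_mul] at h
  exact h.congr_fun fun n => by ring

lemma mellin_fermiDirac_of_one_lt_re {s : ℂ} (hs : 1 < s.re) :
    mellin (fun t => (fermiDirac t : ℂ)) s = (1 - 2 ^ (1 - s)) * Gamma s * riemannZeta s := by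
  have hp (n : ℕ) : (-1 : ℂ) ^ n = 0 ∨ 0 < (n : ℝ) + 1 := Or.inr (by positivity)
  have hF (t : ℝ) (ht : t ∈ Ioi 0) :
      HasSum (fun n : ℕ => (-1 : ℂ) ^ n * Real.exp (-((n : ℝ) + 1) * t)) (fermiDirac t) := by
    exact_mod_cast hasSum_fermiDirac ht
  have hsum : Summable fun n : ℕ => ‖(-1 : ℂ) ^ n‖ / ((n : ℝ) + 1) ^ s.re := by
    simpa using (summable_nat_add_iff 1).mpr (Real.summable_one_div_nat_rpow.mpr hs)
  have hη := (hasSum_neg_one_pow_div_nat_add_one_cpow hs).mul_left (Gamma s)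
  refine (hasSum_mellin hp (by linarith) hF hsum).unique (hη.congr_fun fun n => ?_)
    |>.trans (by ring)
  push_cast
  ring

lemma isPreconnected_strip_union_quadrant :
    IsPreconnected ({s : ℂ | 0 < s.re ∧ s.re < 1} ∪ {s | 0 < s.re ∧ 0 < s.im}) :=
  IsPreconnected.union ((1 + I) / 2) (by norm_num) (by norm_num)
    ((convex_halfSpace_re_gt 0).inter (convex_halfSpace_re_lt 1)).isPreconnected
    ((convex_halfSpace_re_gt 0).inter (convex_halfSpace_im_gt 0)).isPreconnected

lemma mellin_fermiDirac {s : ℂ} (hs₀ : 0 < s.re) (hs₁ : s.re < 1) :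
    mellin (fun t => (fermiDirac t : ℂ)) s = (1 - 2 ^ (1 - s)) * Gamma s * riemannZeta s := by
  -- A connected open set avoiding the pole of `ζ` at `1` that reaches the half-plane `Re s > 1`.
  set D := {s : ℂ | 0 < s.re ∧ s.re < 1} ∪ {s | 0 < s.re ∧ 0 < s.im}
  have hD_open : IsOpen D :=
    ((isOpen_lt continuous_const continuous_re).inter
        (isOpen_lt continuous_re continuous_const)).union
      ((isOpen_lt continuous_const continuous_re).inter
        (isOpen_lt continuous_const continuous_im))
  have hD_re {z : ℂ} (hz : z ∈ D) : 0 < z.re := hz.elim And.left And.left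
  have hD_ne_one {z : ℂ} (hz : z ∈ D) : z ≠ 1 := by
    rintro rfl
    simp [D] at hz
  have hf : AnalyticOnNhd ℂ (mellin fun t => (fermiDirac t : ℂ)) D :=
    DifferentiableOn.analyticOnNhd (fun z hz =>
      (differentiableAt_mellin_fermiDirac (hD_re hz)).differentiableWithinAt) hD_open
  have hg : AnalyticOnNhd ℂ (fun s => (1 - 2 ^ (1 - s)) * Gamma s * riemannZeta s) D := by
    refine DifferentiableOn.analyticOnNhd (fun z hz => DifferentiableAt.differentiableWithinAt ?_)
      hD_open
    have hΓ : DifferentiableAt ℂ Gamma z := differentiableAt_Gamma z fun m hm => by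
      linarith [hD_re hz, show z.re = -m by simp [hm], m.cast_nonneg (α := ℝ)]
    exact ((((differentiableAt_id.const_sub 1).const_cpow (Or.inl two_ne_zero)).const_sub 1).mul
      hΓ).mul (differentiableAt_riemannZeta (hD_ne_one hz))
  have heq : (mellin fun t => (fermiDirac t : ℂ)) =ᶠ[𝓝 (2 + I)]
      fun s => (1 - 2 ^ (1 - s)) * Gamma s * riemannZeta s :=
    eventually_of_mem ((isOpen_lt continuous_const continuous_re).mem_nhds (by simp))
      fun z hz => mellin_fermiDirac_of_one_lt_re hz
  exact hf.eqOn_of_preconnected_of_eventuallyEq hg isPreconnected_strip_union_quadrant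
    (by simp [D]) heq (Or.inl ⟨hs₀, hs₁⟩)

lemma two_sub_two_cpow_ne_zero {z : ℂ} (hz : z.re ≠ 1) : (2 : ℂ) - 2 ^ z ≠ 0 := by
  have hnorm : ‖(2 : ℂ) ^ z‖ = (2 : ℝ) ^ z.re := by
    simpa using norm_natCast_cpow_of_pos two_pos z
  refine sub_ne_zero.mpr fun h => hz ?_
  rw [← Real.rpow_right_inj two_pos (by norm_num : (2 : ℝ) ≠ 1), Real.rpow_one, ← hnorm, ← h]
  simp

lemma two_sub_two_cpow (z : ℂ) : (2 : ℂ) - 2 ^ z = -(2 ^ z * (1 - 2 ^ (1 - z))) := by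
  rw [cpow_sub _ _ two_ne_zero, cpow_one, mul_one_sub, mul_div_cancel₀ _ (by simp)]
  ring

lemma Gamma_div_two_cpow (z : ℂ) :
    Gamma z / 2 ^ z = Gamma (z / 2) * Gamma ((z + 1) / 2) / (2 * Real.sqrt Real.pi) := by
  have h := Gamma_mul_Gamma_add_half (z / 2)
  rw [mul_div_cancel₀ _ two_ne_zero, cpow_sub _ _ two_ne_zero, cpow_one, ← add_div] at h
  have : (Real.sqrt Real.pi : ℂ) ≠ 0 := ofReal_ne_zero.mpr (Real.sqrt_pos.mpr Real.pi_pos).ne'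
  rw [h]
  field_simp

noncomputable def completedG (z : ℂ) : ℂ :=
  (Real.pi : ℂ) ^ (-z / 2) / (2 - 2 ^ z) * Gamma (1 - z / 2) * G z

lemma completedG_eq {z : ℂ} (h0 : 0 < z.re) (h1 : z.re < 1) :
    completedG z =
      -(Gamma (1 - z / 2) * Gamma ((z + 1) / 2)) / (2 * Real.sqrt Real.pi) *
        completedRiemannZeta z := by
  have hz : z ≠ 0 := by rintro rfl; simp at h0
  have hΓhalf : Gamma (z / 2) ≠ 0 := Gamma_ne_zero_of_re_pos (by simpa using h0)
  have hπ : (Real.pi : ℂ) ^ (-z / 2) ≠ 0 := by simp [Real.pi_ne_zero]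
  have h2z : (2 : ℂ) ^ z ≠ 0 := by simp
  have heta : (1 : ℂ) - 2 ^ (1 - z) ≠ 0 := fun h => two_sub_two_cpow_ne_zero h1.ne <| by
    rw [two_sub_two_cpow, h, mul_zero, neg_zero]
  have hsqrt : (Real.sqrt Real.pi : ℂ) ≠ 0 := ofReal_ne_zero.mpr (Real.sqrt_pos.mpr Real.pi_pos).ne'
  have hΓ : Gamma z = 2 ^ z * (Gamma (z / 2) * Gamma ((z + 1) / 2) / (2 * Real.sqrt Real.pi)) := by
    rw [← Gamma_div_two_cpow, mul_div_cancel₀ _ h2z]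
  rw [completedG, G_eq_mellin, mellin_fermiDirac h0 h1, two_sub_two_cpow, hΓ,
    riemannZeta_def_of_ne_zero hz, Gammaℝ_def]
  field_simp

lemma completedG_one_sub {z : ℂ} (h0 : 0 < z.re) (h1 : z.re < 1) :
    completedG (1 - z) = completedG z := by
  rw [completedG_eq (by simpa using h1) (by simpa using h0), completedG_eq h0 h1,
    completedRiemannZeta_one_sub, show 1 - (1 - z) / 2 = (z + 1) / 2 by ring,
    show (1 - z + 1) / 2 = 1 - z / 2 by ring, mul_comm (Gamma ((z + 1) / 2))]

theorem G_functional_equation (z : ℂ) (hz : z.re ∈ Set.Ioo (0 : ℝ) 1) :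
    (2 : ℂ) - 2 ^ z ≠ 0 ∧ (2 : ℂ) - 2 ^ (1 - z) ≠ 0 ∧
    (Real.pi : ℂ) ^ (-z / 2) / (2 - 2 ^ z) * Complex.Gamma (1 - z / 2) * G z =
      (Real.pi : ℂ) ^ (-(1 - z) / 2) / (2 - 2 ^ (1 - z)) *
        Complex.Gamma (1 - (1 - z) / 2) * G (1 - z) := by
  obtain ⟨h0, h1⟩ := hz
  have h1' : (1 - z).re ≠ 1 := by simpa using h0.ne'
  exact ⟨two_sub_two_cpow_ne_zero h1.ne, two_sub_two_cpow_ne_zero h1',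
    (completedG_one_sub h0 h1).symm⟩
end

section
/- Let k : ℝ → ℝ be measurable, vanishing on (-∞, 0), with ∫₀^∞ (1 + y) |k(y)| dy < ∞ and ∫₀^∞ y k(y)² dy < ∞, and let k̂(x) := ∫₀^∞ e^{i x y} k(y) dy. Then lim_{δ → 0⁺} Re ∫₀^∞ e^{-δ x} conj(i k̂'(x)) · k̂(x) dx = -π ∫₀^∞ y k(y)² dy. -/
/-!
For `δ > 0`, `i k̂' = -(y k)^` and Fubini turn the regularized integral into
`-∬_{y,z>0} y k(y) k(z) P_δ(z - y)`, where `P_δ(t) = δ / (δ² + t²)` is the real part of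
`∫₀^∞ e^{-δx} e^{ixt} dx = (δ - it)⁻¹`. Splitting `y = √y √z + √y (√y - √z)`, the first part is
`∫ R(t) P_δ(t) dt` for the autocorrelation `R` of `h(y) = √y k(y) 1_{y>0} ∈ L²`; `R` is bounded and
continuous (translation is continuous on `L²`), so this tends to `π R(0) = π ∫ y k²`. The second
part tends to `0` by dominated convergence: `√y |√y - √z| P_δ(z - y) ≤ 1/2` because
`(z - y)² ≥ y (√y - √z)²`, and the integrand vanishes on the diagonal.
-/

open MeasureTheory Filter

/-- The Fourier transform `k̂ x = ∫₀^∞ e^(i x y) k y dy` of a function supported on `[0,∞)`. -/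
noncomputable def fhat (k : ℝ → ℝ) (x : ℝ) : ℂ :=
  ∫ y in Set.Ioi (0 : ℝ), Complex.exp (Complex.I * x * y) * k y

open Set Topology Complex

/-- The Poisson kernel of the upper half-plane, without the factor `1 / π`. -/
noncomputable def halfPlanePoissonKernel (δ t : ℝ) : ℝ := δ / (δ ^ 2 + t ^ 2)

namespace halfPlanePoissonKernel

lemma nonneg {δ : ℝ} (hδ : 0 ≤ δ) (t : ℝ) : 0 ≤ halfPlanePoissonKernel δ t := by
  unfold halfPlanePoissonKernel; positivity

lemma apply_mul_left {δ : ℝ} (hδ : 0 < δ) (x : ℝ) :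
    halfPlanePoissonKernel δ (δ * x) = δ⁻¹ * (1 + x ^ 2)⁻¹ := by
  rw [halfPlanePoissonKernel]
  field_simp

lemma measurable (δ : ℝ) : Measurable (halfPlanePoissonKernel δ) := by
  unfold halfPlanePoissonKernel; fun_prop

lemma integrable {δ : ℝ} (hδ : 0 < δ) : Integrable (halfPlanePoissonKernel δ) := by
  refine ((integrable_inv_one_add_sq.comp_div hδ.ne').const_mul δ⁻¹).congr
    (.of_forall fun t => ?_)
  simpa [mul_div_cancel₀ t hδ.ne'] using (apply_mul_left hδ (t / δ)).symm

lemma tendsto_zero {t : ℝ} (ht : t ≠ 0) :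
    Tendsto (halfPlanePoissonKernel · t) (𝓝 0) (𝓝 0) := by
  have : ContinuousAt (halfPlanePoissonKernel · t) 0 := by
    unfold halfPlanePoissonKernel
    exact continuousAt_id.div (by fun_prop) (by positivity)
  simpa [halfPlanePoissonKernel] using this.tendsto

lemma re_inv_ofReal_sub_I_mul (δ t : ℝ) :
    ((δ : ℂ) - I * t)⁻¹.re = halfPlanePoissonKernel δ t := by
  simp [halfPlanePoissonKernel, Complex.inv_re, Complex.normSq_apply, sq]

end halfPlanePoissonKernel

open halfPlanePoissonKernel in
theorem tendsto_integral_mul_halfPlanePoissonKernel {φ : ℝ → ℝ} (hφ : Continuous φ) {C : ℝ}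
    (hC : ∀ t, |φ t| ≤ C) :
    Tendsto (fun δ => ∫ t, φ t * halfPlanePoissonKernel δ t) (𝓝[>] 0)
      (𝓝 (Real.pi * φ 0)) := by
  have hrescale : ∀ δ > 0,
      ∫ t, φ t * halfPlanePoissonKernel δ t = ∫ x, φ (δ * x) * (1 + x ^ 2)⁻¹ := by
    intro δ hδ
    have h := Measure.integral_comp_mul_left (fun t => φ t * halfPlanePoissonKernel δ t) δ
    simp_rw [apply_mul_left hδ, mul_left_comm _ δ⁻¹, integral_const_mul, smul_eq_mul,
      abs_of_pos (inv_pos.2 hδ)] at h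
    exact (mul_left_cancel₀ (inv_ne_zero hδ.ne') h).symm
  have hlim : Tendsto (fun δ => ∫ x, φ (δ * x) * (1 + x ^ 2)⁻¹) (𝓝[>] 0)
      (𝓝 (∫ x, φ 0 * (1 + x ^ 2)⁻¹)) := by
    refine tendsto_integral_filter_of_dominated_convergence (fun x => C * (1 + x ^ 2)⁻¹)
      (.of_forall fun δ => by fun_prop) (.of_forall fun δ => .of_forall fun x => ?_)
      (integrable_inv_one_add_sq.const_mul C) (.of_forall fun x => ?_)
    · rw [norm_mul, Real.norm_of_nonneg (inv_nonneg.2 (by positivity))]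
      exact mul_le_mul_of_nonneg_right (hC _) (inv_nonneg.2 (by positivity))
    · have hδx : Tendsto (· * x) (𝓝[>] (0 : ℝ)) (𝓝 0) := by
        simpa using (continuous_mul_const x).continuousWithinAt.tendsto (s := Ioi 0) (x := 0)
      exact ((hφ.tendsto 0).comp hδx).mul_const _
  rw [integral_const_mul, integral_univ_inv_one_add_sq, mul_comm] at hlim
  exact hlim.congr' (eventually_nhdsWithin_of_forall fun δ hδ => (hrescale δ hδ).symm)

section Autocorrelation

variable {H : ℝ → ℝ}

noncomputable def autocorrelation (H : ℝ → ℝ) (t : ℝ) : ℝ := ∫ y, H y * H (y + t)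

lemma memLp_comp_add_right (hH : MemLp H 2 volume) (t : ℝ) :
    MemLp (fun y => H (y + t)) 2 volume :=
  hH.comp_measurePreserving (measurePreserving_add_right volume t)

lemma integrable_mul_comp_add_right (hH : MemLp H 2 volume) (t : ℝ) :
    Integrable (fun y => H y * H (y + t)) :=
  hH.integrable_mul (memLp_comp_add_right hH t)

lemma integral_abs_mul_comp_add_right_le (hH : MemLp H 2 volume) (t : ℝ) :
    ∫ y, |H y * H (y + t)| ≤ ∫ y, H y ^ 2 := by
  have hsq := hH.integrable_sq
  calc ∫ y, |H y * H (y + t)|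
      ≤ ∫ y, (H y ^ 2 + H (y + t) ^ 2) / 2 :=
        integral_mono (integrable_mul_comp_add_right hH t).abs
          ((hsq.add (memLp_comp_add_right hH t).integrable_sq).div_const 2) fun y => by
          rw [abs_mul]
          nlinarith [sq_nonneg (|H y| - |H (y + t)|), sq_abs (H y), sq_abs (H (y + t))]
    _ = ∫ y, H y ^ 2 := by
      rw [integral_div, integral_add hsq (memLp_comp_add_right hH t).integrable_sq,
        integral_add_right_eq_self (fun y => H y ^ 2) t]
      ring

lemma abs_autocorrelation_le (hH : MemLp H 2 volume) (t : ℝ) :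
    |autocorrelation H t| ≤ ∫ y, H y ^ 2 :=
  (abs_integral_le_integral_abs).trans (integral_abs_mul_comp_add_right_le hH t)

lemma autocorrelation_zero : autocorrelation H 0 = ∫ y, H y ^ 2 := by
  simp [autocorrelation, sq]

lemma continuous_autocorrelation (hH : MemLp H 2 volume) : Continuous (autocorrelation H) := by
  have : Fact ((2 : ENNReal) ≠ ⊤) := ⟨ENNReal.ofNat_ne_top⟩
  set h := hH.toLp H
  have hinner : ∀ t, autocorrelation H t = inner ℝ h (DomAddAct.mk t +ᵥ h) := by
    intro t
    rw [L2.inner_def]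
    refine integral_congr_ae ?_
    have htrans := (measurePreserving_add_left volume t).quasiMeasurePreserving.ae_eq_comp
      hH.coeFn_toLp
    filter_upwards [hH.coeFn_toLp, DomAddAct.vadd_Lp_ae_eq (DomAddAct.mk t) h, htrans]
      with y h1 h2 h3
    simp only [Function.comp_apply] at h3
    rw [h2, Equiv.symm_apply_apply, vadd_eq_add, h1, h3, add_comm, real_inner_eq_re_inner,
      RCLike.inner_apply, conj_trivial, mul_comm]
    rfl
  rw [funext hinner]
  exact continuous_const.inner (DomAddAct.continuous_mk.vadd (continuous_const (y := h)))

lemma shearAddRight_apply (p : ℝ × ℝ) : MeasurableEquiv.shearAddRight ℝ p = (p.1, p.1 + p.2) :=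
  rfl

lemma integrable_mul_comp_add_mul (hH : MemLp H 2 volume) {g : ℝ → ℝ} (hg : Integrable g) :
    Integrable (fun p : ℝ × ℝ => H p.1 * H (p.1 + p.2) * g p.2) (volume.prod volume) := by
  have hmeas : AEStronglyMeasurable (fun p : ℝ × ℝ => H p.1 * H (p.1 + p.2) * g p.2)
      (volume.prod volume) :=
    (hH.1.comp_fst.mul ((hH.1.comp_snd (μ := volume)).comp_measurePreserving
      (measurePreserving_prod_add volume volume))).mul hg.1.comp_snd
  refine (integrable_prod_iff' hmeas).2
    ⟨.of_forall fun t => (integrable_mul_comp_add_right hH t).mul_const (g t), ?_⟩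
  refine (hg.norm.const_mul (∫ y, H y ^ 2)).mono' hmeas.prod_swap.norm.integral_prod_right'
    (.of_forall fun t => ?_)
  simp only [Real.norm_eq_abs, abs_mul (_ * _) (g t), integral_mul_const]
  rw [abs_of_nonneg (by positivity)]
  exact mul_le_mul_of_nonneg_right (integral_abs_mul_comp_add_right_le hH t) (abs_nonneg _)

lemma integrable_mul_mul_comp_sub (hH : MemLp H 2 volume) {g : ℝ → ℝ} (hg : Integrable g) :
    Integrable (fun p : ℝ × ℝ => H p.1 * H p.2 * g (p.2 - p.1)) (volume.prod volume) := by
  rw [← (measurePreserving_prod_add volume volume).integrable_comp_emb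
    (MeasurableEquiv.shearAddRight ℝ).measurableEmbedding]
  simpa [Function.comp_def] using integrable_mul_comp_add_mul hH hg

lemma integral_mul_mul_comp_sub (hH : MemLp H 2 volume) {g : ℝ → ℝ} (hg : Integrable g) :
    ∫ p : ℝ × ℝ, H p.1 * H p.2 * g (p.2 - p.1) ∂(volume.prod volume)
      = ∫ t, autocorrelation H t * g t := by
  rw [← (measurePreserving_prod_add volume volume).integral_comp'
    (f := MeasurableEquiv.shearAddRight ℝ), integral_prod_symm _ ?_]
  · simp [shearAddRight_apply, autocorrelation, integral_mul_const]
  · simpa [shearAddRight_apply] using integrable_mul_comp_add_mul hH hg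

end Autocorrelation

local notation "μ₊" => volume.restrict (Ioi (0 : ℝ))

lemma ae_fst_pos_and_snd_pos : ∀ᵐ p ∂(μ₊.prod μ₊), 0 < p.1 ∧ 0 < p.2 := by
  rw [Measure.prod_restrict]
  exact ae_restrict_of_forall_mem (measurableSet_Ioi.prod measurableSet_Ioi) fun p hp => hp

section FourierHalfLine

variable {f g k : ℝ → ℝ}

lemma integrableOn_exp_I_mul_mul (hf : IntegrableOn f (Ioi 0)) (x : ℝ) :
    IntegrableOn (fun y : ℝ => exp (I * x * y) * f y) (Ioi 0) :=
  hf.ofReal.bdd_mul (c := 1) (by fun_prop) (.of_forall fun y => by simp [Complex.norm_exp])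

lemma hasDerivAt_fhat (hk : IntegrableOn k (Ioi 0))
    (hyk : IntegrableOn (fun y => y * k y) (Ioi 0)) (x : ℝ) :
    HasDerivAt (fhat k) (I * fhat (fun y => y * k y) x) x := by
  have hderiv := hasDerivAt_integral_of_dominated_loc_of_deriv_le (μ := μ₊) (x₀ := x)
    (F := fun (x y : ℝ) => exp (I * x * y) * k y)
    (F' := fun (x y : ℝ) => I * (exp (I * x * y) * ((y * k y : ℝ) : ℂ)))
    (bound := fun y => ‖y * k y‖) univ_mem
    (.of_forall fun x => (integrableOn_exp_I_mul_mul hk x).1) (integrableOn_exp_I_mul_mul hk x)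
    ((integrableOn_exp_I_mul_mul hyk x).1.const_mul I)
    (.of_forall fun y x _ => by simp [Complex.norm_exp]) hyk.norm
    (.of_forall fun y x _ => ?_)
  · rw [integral_const_mul] at hderiv
    exact hderiv.2
  · have hexp : HasDerivAt (fun x : ℝ => exp (I * x * y)) (exp (I * x * y) * (I * y)) x := by
      simpa [mul_right_comm I] using ((hasDerivAt_id x).ofReal_comp.const_mul (I * y)).cexp
    refine (hexp.mul_const (k y : ℂ)).congr_deriv ?_
    push_cast
    ring

lemma I_mul_deriv_fhat (hk : IntegrableOn k (Ioi 0))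
    (hyk : IntegrableOn (fun y => y * k y) (Ioi 0)) (x : ℝ) :
    I * deriv (fhat k) x = -fhat (fun y => y * k y) x := by
  rw [(hasDerivAt_fhat hk hyk x).deriv, ← mul_assoc, I_mul_I, neg_one_mul]

lemma integral_exp_neg_mul_mul_exp_I_mul {δ : ℝ} (hδ : 0 < δ) (t : ℝ) :
    ∫ x in Ioi 0, (Real.exp (-δ * x) : ℂ) * exp (I * x * t) = ((δ : ℂ) - I * t)⁻¹ := by
  have ha : (-((δ : ℂ) - I * t)).re < 0 := by simpa using hδ
  calc ∫ x in Ioi 0, (Real.exp (-δ * x) : ℂ) * exp (I * x * t)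
      = ∫ x : ℝ in Ioi 0, exp (-((δ : ℂ) - I * t) * x) := by
        refine integral_congr_ae (.of_forall fun x => ?_)
        push_cast
        rw [← Complex.exp_add]
        ring_nf
    _ = ((δ : ℂ) - I * t)⁻¹ := by
        rw [integral_exp_mul_complex_Ioi ha 0, ofReal_zero, mul_zero, Complex.exp_zero, div_neg,
          neg_div, neg_neg, one_div]

lemma conj_fhat_mul_fhat (x : ℝ) :
    starRingEnd ℂ (fhat f x) * fhat g x
      = ∫ p, ((f p.1 * g p.2 : ℝ) : ℂ) * exp (I * x * ((p.2 - p.1 : ℝ) : ℂ)) ∂(μ₊.prod μ₊) := by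
  rw [fhat, fhat, ← integral_conj, ← integral_prod_mul]
  refine integral_congr_ae (.of_forall fun p => ?_)
  simp only [map_mul, ← Complex.exp_conj, Complex.conj_I, Complex.conj_ofReal]
  rw [show I * x * ((p.2 - p.1 : ℝ) : ℂ) = -I * x * p.1 + I * x * p.2 by push_cast; ring,
    Complex.exp_add]
  push_cast
  ring

theorem re_integral_exp_neg_mul_conj_fhat_mul_fhat (hf : IntegrableOn f (Ioi 0))
    (hg : IntegrableOn g (Ioi 0)) {δ : ℝ} (hδ : 0 < δ) :
    (∫ x in Ioi 0, (Real.exp (-δ * x) : ℂ) * (starRingEnd ℂ (fhat f x) * fhat g x)).re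
      = ∫ p, f p.1 * g p.2 * halfPlanePoissonKernel δ (p.2 - p.1) ∂(μ₊.prod μ₊) := by
  set F : ℝ → ℝ × ℝ → ℂ := fun x p => ((f p.1 * g p.2 : ℝ) : ℂ) *
    ((Real.exp (-δ * x) : ℂ) * exp (I * x * ((p.2 - p.1 : ℝ) : ℂ)))
  have hF : Integrable (Function.uncurry F) (μ₊.prod (μ₊.prod μ₊)) := by
    have hexp : IntegrableOn (fun x => Real.exp (-δ * x)) (Ioi 0) := exp_neg_integrableOn_Ioi 0 hδ
    have hphase : Continuous fun q : ℝ × ℝ × ℝ => exp (I * q.1 * ((q.2.2 - q.2.1 : ℝ) : ℂ)) := by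
      fun_prop
    refine ((hexp.ofReal.mul_prod (hf.ofReal.mul_prod hg.ofReal)).mul_bdd (c := 1)
      hphase.aestronglyMeasurable (.of_forall fun q => ?_)).congr (.of_forall fun q => ?_)
    · simp [Complex.norm_exp]
    · simp only [Function.uncurry, F, ofReal_mul, RCLike.ofReal_eq_complex_ofReal]
      ring
  calc (∫ x in Ioi 0, (Real.exp (-δ * x) : ℂ) * (starRingEnd ℂ (fhat f x) * fhat g x)).re
      = (∫ x in Ioi 0, ∫ p, F x p ∂(μ₊.prod μ₊)).re := by
        congr 1
        refine integral_congr_ae (.of_forall fun x => ?_)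
        simp only [conj_fhat_mul_fhat x, ← integral_const_mul, F]
        refine integral_congr_ae (.of_forall fun p => ?_)
        ring
    _ = (∫ p, (∫ x in Ioi 0, F x p) ∂(μ₊.prod μ₊)).re := by rw [integral_integral_swap hF]
    _ = _ := by
        have hre := integral_re hF.integral_prod_right
        simp only [Function.uncurry_apply_pair, RCLike.re_to_complex] at hre
        rw [← hre]
        refine integral_congr_ae (.of_forall fun p => ?_)
        simp only [F, integral_const_mul, integral_exp_neg_mul_mul_exp_I_mul hδ,
          Complex.re_ofReal_mul, halfPlanePoissonKernel.re_inv_ofReal_sub_I_mul]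

end FourierHalfLine

section Remainder

variable {k : ℝ → ℝ}

lemma sqrt_mul_abs_sqrt_sub_mul_halfPlanePoissonKernel_le {y z δ : ℝ} (hy : 0 ≤ y)
    (hz : 0 ≤ z) (hδ : 0 < δ) :
    √y * |√y - √z| * halfPlanePoissonKernel δ (z - y) ≤ 1 / 2 := by
  set s := √y * |√y - √z|
  have hzy : s ^ 2 ≤ (z - y) ^ 2 := by
    have hfac : z - y = (√z - √y) * (√z + √y) := by
      rw [mul_comm, ← sq_sub_sq, Real.sq_sqrt hy, Real.sq_sqrt hz]
    rw [hfac, mul_pow, mul_pow, ← sq_abs (√z - √y), abs_sub_comm, mul_comm]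
    gcongr
    linarith [Real.sqrt_nonneg z]
  rw [halfPlanePoissonKernel, mul_div_assoc', div_le_iff₀ (by positivity)]
  nlinarith [sq_nonneg (s - δ)]

noncomputable def poissonRemainder (k : ℝ → ℝ) (δ : ℝ) (p : ℝ × ℝ) : ℝ :=
  √p.1 * (√p.1 - √p.2) * k p.1 * k p.2 * halfPlanePoissonKernel δ (p.2 - p.1)

lemma aestronglyMeasurable_poissonRemainder (hk : IntegrableOn k (Ioi 0)) (δ : ℝ) :
    AEStronglyMeasurable (poissonRemainder k δ) (μ₊.prod μ₊) :=
  (((Continuous.aestronglyMeasurable (by fun_prop)).mul hk.1.comp_fst).mul hk.1.comp_snd).mul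
    ((halfPlanePoissonKernel.measurable δ).comp
      (measurable_snd.sub measurable_fst)).aestronglyMeasurable

lemma norm_poissonRemainder_le {δ : ℝ} (hδ : 0 < δ) :
    ∀ᵐ p ∂(μ₊.prod μ₊), ‖poissonRemainder k δ p‖ ≤ ‖k p.1 * k p.2‖ / 2 := by
  filter_upwards [ae_fst_pos_and_snd_pos] with p ⟨hy, hz⟩
  have hle := sqrt_mul_abs_sqrt_sub_mul_halfPlanePoissonKernel_le hy.le hz.le hδ
  have hP := halfPlanePoissonKernel.nonneg hδ.le (p.2 - p.1)
  rw [poissonRemainder, Real.norm_eq_abs, Real.norm_eq_abs]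
  calc |√p.1 * (√p.1 - √p.2) * k p.1 * k p.2 * halfPlanePoissonKernel δ (p.2 - p.1)|
      = √p.1 * |√p.1 - √p.2| * halfPlanePoissonKernel δ (p.2 - p.1) * |k p.1 * k p.2| := by
        rw [abs_mul, abs_mul, abs_mul, abs_mul, abs_mul, abs_of_nonneg (Real.sqrt_nonneg _),
          abs_of_nonneg hP]
        ring
    _ ≤ 1 / 2 * |k p.1 * k p.2| := by gcongr
    _ = |k p.1 * k p.2| / 2 := by ring

lemma integrable_poissonRemainder (hk : IntegrableOn k (Ioi 0)) {δ : ℝ} (hδ : 0 < δ) :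
    Integrable (poissonRemainder k δ) (μ₊.prod μ₊) :=
  ((hk.mul_prod hk).norm.div_const 2).mono' (aestronglyMeasurable_poissonRemainder hk δ)
    (norm_poissonRemainder_le hδ)

lemma tendsto_integral_poissonRemainder (hk : IntegrableOn k (Ioi 0)) :
    Tendsto (fun δ => ∫ p, poissonRemainder k δ p ∂(μ₊.prod μ₊)) (𝓝[>] 0) (𝓝 0) := by
  have hlim : ∀ p : ℝ × ℝ, Tendsto (poissonRemainder k · p) (𝓝[>] 0) (𝓝 0) := by
    intro p
    rcases eq_or_ne p.1 p.2 with hp | hp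
    · simp [poissonRemainder, hp]
    · simpa only [poissonRemainder, mul_zero] using ((halfPlanePoissonKernel.tendsto_zero
        (sub_ne_zero.2 hp.symm)).const_mul (√p.1 * (√p.1 - √p.2) * k p.1 * k p.2)).mono_left
        nhdsWithin_le_nhds
  simpa using tendsto_integral_filter_of_dominated_convergence (l := 𝓝[>] 0) (f := fun _ => 0) _
    (.of_forall (aestronglyMeasurable_poissonRemainder hk))
    (eventually_nhdsWithin_of_forall fun δ hδ => norm_poissonRemainder_le hδ)
    ((hk.mul_prod hk).norm.div_const 2) (.of_forall hlim)

end Remainder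

section SqrtWeighted

variable {k : ℝ → ℝ}

noncomputable def sqrtWeighted (k : ℝ → ℝ) : ℝ → ℝ := (Ioi 0).indicator fun y => √y * k y

lemma sqrtWeighted_sq (y : ℝ) :
    sqrtWeighted k y ^ 2 = (Ioi 0).indicator (fun y => y * k y ^ 2) y := by
  by_cases hy : y ∈ Ioi (0 : ℝ)
  · simp [sqrtWeighted, hy, mul_pow, Real.sq_sqrt (le_of_lt hy)]
  · simp [sqrtWeighted, hy]

lemma integral_sqrtWeighted_sq : ∫ y, sqrtWeighted k y ^ 2 = ∫ y in Ioi 0, y * k y ^ 2 := by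
  simp_rw [sqrtWeighted_sq, integral_indicator measurableSet_Ioi]

lemma memLp_sqrtWeighted (hk : Measurable k) (h : IntegrableOn (fun y => y * k y ^ 2) (Ioi 0)) :
    MemLp (sqrtWeighted k) 2 volume := by
  have hmeas : Measurable (sqrtWeighted k) :=
    (Real.continuous_sqrt.measurable.mul hk).indicator measurableSet_Ioi
  refine (memLp_two_iff_integrable_sq hmeas.aestronglyMeasurable).2 ?_
  simpa only [sqrtWeighted_sq] using (integrable_indicator_iff measurableSet_Ioi).2 h

theorem integral_mul_mul_halfPlanePoissonKernel_eq (hk : Measurable k)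
    (hk1 : IntegrableOn k (Ioi 0)) (hk2 : IntegrableOn (fun y => y * k y ^ 2) (Ioi 0))
    {δ : ℝ} (hδ : 0 < δ) :
    ∫ p, p.1 * k p.1 * k p.2 * halfPlanePoissonKernel δ (p.2 - p.1) ∂(μ₊.prod μ₊)
      = (∫ t, autocorrelation (sqrtWeighted k) t * halfPlanePoissonKernel δ t)
        + ∫ p, poissonRemainder k δ p ∂(μ₊.prod μ₊) := by
  have hH := memLp_sqrtWeighted hk hk2
  have hHint := integrable_mul_mul_comp_sub hH (halfPlanePoissonKernel.integrable hδ)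
  have hHvanish : ∀ p ∉ Ioi (0 : ℝ) ×ˢ Ioi 0,
      sqrtWeighted k p.1 * sqrtWeighted k p.2 * halfPlanePoissonKernel δ (p.2 - p.1) = 0 := by
    intro p hp
    rcases not_and_or.1 hp with hp | hp <;> simp [sqrtWeighted, hp]
  rw [← integral_mul_mul_comp_sub hH (halfPlanePoissonKernel.integrable hδ),
    ← setIntegral_eq_integral_of_forall_compl_eq_zero hHvanish, ← Measure.prod_restrict,
    ← integral_add (by rw [Measure.prod_restrict]; exact hHint.restrict)
      (integrable_poissonRemainder hk1 hδ)]
  refine integral_congr_ae ?_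
  filter_upwards [ae_fst_pos_and_snd_pos] with p ⟨hy, hz⟩
  simp only [sqrtWeighted, poissonRemainder, indicator_of_mem (mem_Ioi.2 hy),
    indicator_of_mem (mem_Ioi.2 hz)]
  have hsq : √p.1 * √p.1 = p.1 := Real.mul_self_sqrt hy.le
  linear_combination (-(k p.1 * k p.2 * halfPlanePoissonKernel δ (p.2 - p.1))) * hsq

end SqrtWeighted

theorem re_inner_inverse_J_abel_general (k : ℝ → ℝ) (hmeas : Measurable k)
    (hint : IntegrableOn (fun y => (1 + y) * |k y|) (Set.Ioi 0))
    (hint' : IntegrableOn (fun y => y * k y ^ 2) (Set.Ioi 0)) :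
    Tendsto
      (fun δ : ℝ =>
        (∫ x in Set.Ioi (0 : ℝ),
          (Real.exp (-δ * x) : ℂ) *
            (starRingEnd ℂ (Complex.I * deriv (fhat k) x) * fhat k x)).re)
      (nhdsWithin 0 (Set.Ioi 0))
      (nhds (-Real.pi * ∫ y in Set.Ioi (0 : ℝ), y * k y ^ 2)) := by
  have hk : IntegrableOn k (Ioi 0) :=
    hint.mono' hmeas.aestronglyMeasurable (ae_restrict_of_forall_mem measurableSet_Ioi
      fun y (hy : 0 < y) => by rw [Real.norm_eq_abs]; nlinarith [abs_nonneg (k y)])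
  have hyk : IntegrableOn (fun y => y * k y) (Ioi 0) :=
    hint.mono' (measurable_id.mul hmeas).aestronglyMeasurable
      (ae_restrict_of_forall_mem measurableSet_Ioi fun y (hy : 0 < y) => by
        rw [Real.norm_eq_abs, abs_mul, abs_of_pos hy]; nlinarith [abs_nonneg (k y)])
  have hH := memLp_sqrtWeighted hmeas hint'
  have hmain := tendsto_integral_mul_halfPlanePoissonKernel (continuous_autocorrelation hH)
    (abs_autocorrelation_le hH)
  rw [autocorrelation_zero, integral_sqrtWeighted_sq] at hmain
  have hlim := (hmain.add (tendsto_integral_poissonRemainder hk)).neg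
  rw [add_zero, ← neg_mul] at hlim
  refine hlim.congr' (eventually_nhdsWithin_of_forall fun δ (hδ : 0 < δ) => ?_)
  have hconj : ∀ x, starRingEnd ℂ (I * deriv (fhat k) x) * fhat k x
      = -(starRingEnd ℂ (fhat (fun y => y * k y) x) * fhat k x) := fun x => by
    rw [I_mul_deriv_fhat hk hyk, map_neg, neg_mul]
  simp_rw [hconj, mul_neg, integral_neg, neg_re]
  rw [re_integral_exp_neg_mul_conj_fhat_mul_fhat hyk hk hδ,
    integral_mul_mul_halfPlanePoissonKernel_eq hmeas hk hint' hδ]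

theorem re_inner_inverse_J_abel (k : ℝ → ℝ) (hmeas : Measurable k)
    (hsupp : ∀ y < (0 : ℝ), k y = 0)
    (hint : IntegrableOn (fun y => (1 + y) * |k y|) (Set.Ioi 0))
    (hint' : IntegrableOn (fun y => y * k y ^ 2) (Set.Ioi 0)) :
    Tendsto
      (fun δ : ℝ =>
        (∫ x in Set.Ioi (0 : ℝ),
          (Real.exp (-δ * x) : ℂ) *
            (starRingEnd ℂ (Complex.I * deriv (fhat k) x) * fhat k x)).re)
      (nhdsWithin 0 (Set.Ioi 0))
      (nhds (-Real.pi * ∫ y in Set.Ioi (0 : ℝ), y * k y ^ 2)) :=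
  re_inner_inverse_J_abel_general k hmeas hint hint'
end
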